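/- Let −2 ≤ α ≤ 0 and x ∈ [0,1). Then φ(x)² − (1 + x + αx)φ(x) + x ≥ 0. -/

import Mathlib

/-!
Put `β = α + 1 ≤ 1` and `y = 1 - x ∈ (0, 1]`. For `β ≠ 0` we have `φ = (1 - y^β) / β`, and `β²` times
the expression is `scaledGap β y`. This vanishes at `y = 1`, and it is nonincreasing on `(0, 1]`
because `y^(1-β) ∂_y scaledGap β y = 2β(y^β - 1) + β²(1 + β)(1 - y) ≤ β²(β - 1)(1 - y) ≤ 0`, by the
Bernoulli-type bound `β(y^β - 1) ≤ β²(y - 1)`. For `β = 0` we have `φ = -log y`, and the expression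
`log² y + log y + 1 - y` is nonnegative by the two bounds `1 - 1/y ≤ log y ≤ y - 1`.
-/

open Real Set

/-- `φ(x) = ∫₀ˣ (1-t)^α dt`. -/
noncomputable def phi (α : ℝ) (x : ℝ) : ℝ := ∫ t in (0 : ℝ)..x, (1 - t) ^ α

lemma phi_of_ne_neg_one {α x : ℝ} (hα : α ≠ -1) (hx : x < 1) :
    phi α x = (1 - (1 - x) ^ (α + 1)) / (α + 1) := by
  rw [phi, intervalIntegral.integral_comp_sub_left (fun s : ℝ => s ^ α) 1,
    sub_zero, integral_rpow (Or.inr ⟨hα, notMem_uIcc_of_lt (by linarith) zero_lt_one⟩), one_rpow]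

lemma phi_neg_one {x : ℝ} (hx : x < 1) : phi (-1) x = -log (1 - x) := by
  rw [phi, intervalIntegral.integral_comp_sub_left (fun s : ℝ => s ^ (-1 : ℝ)) 1]
  simp only [rpow_neg_one, sub_zero]
  rw [integral_inv (notMem_uIcc_of_lt (by linarith) zero_lt_one), one_div, log_inv]

lemma one_add_mul_sub_one_le_rpow_of_nonpos {y β : ℝ} (hy : 0 < y) (hβ : β ≤ 0) :
    1 + β * (y - 1) ≤ y ^ β := by
  have hlog : β * (y - 1) ≤ log y * β := by
    rw [mul_comm]; exact mul_le_mul_of_nonpos_right (log_le_sub_one_of_pos hy) hβ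
  rw [rpow_def_of_pos hy]
  linarith [add_one_le_exp (log y * β)]

lemma mul_rpow_sub_one_le_sq_mul_sub_one {y β : ℝ} (hy : 0 < y) (hβ : β ≤ 1) :
    β * (y ^ β - 1) ≤ β ^ 2 * (y - 1) := by
  rcases le_total 0 β with hβ₀ | hβ₀
  · have h := rpow_one_add_le_one_add_mul_self (s := y - 1) (by linarith) hβ₀ hβ
    rw [add_sub_cancel] at h
    nlinarith
  · nlinarith [one_add_mul_sub_one_le_rpow_of_nonpos hy hβ₀]

noncomputable def scaledGap (β y : ℝ) : ℝ :=
  (1 - y ^ β) * (1 - y ^ β - β) + β ^ 2 * (1 - y) * y ^ β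

lemma scaledGap_one (β : ℝ) : scaledGap β 1 = 0 := by
  simp [scaledGap]

lemma hasDerivAt_scaledGap (β : ℝ) {z : ℝ} (hz : 0 < z) :
    HasDerivAt (scaledGap β)
      (z ^ (β - 1) * (2 * β * (z ^ β - 1) + β ^ 2 * (1 + β) * (1 - z))) z := by
  have hpow : HasDerivAt (fun z : ℝ => z ^ β) (β * z ^ (β - 1)) z :=
    hasDerivAt_rpow_const (Or.inl hz.ne')
  have h := ((hpow.const_sub 1).mul ((hpow.const_sub 1).sub_const β)).add
    (((hasDerivAt_id z).const_sub 1).const_mul (β ^ 2) |>.mul hpow)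
  refine h.congr_deriv ?_
  rw [id, rpow_sub_one hz.ne']
  field_simp
  ring

lemma scaledGap_deriv_nonpos {β z : ℝ} (hβ : β ≤ 1) (hz₀ : 0 < z) (hz₁ : z ≤ 1) :
    z ^ (β - 1) * (2 * β * (z ^ β - 1) + β ^ 2 * (1 + β) * (1 - z)) ≤ 0 := by
  have hbernoulli := mul_rpow_sub_one_le_sq_mul_sub_one hz₀ hβ
  have hsign : 0 ≤ β ^ 2 * (1 - z) * (1 - β) :=
    mul_nonneg (mul_nonneg (sq_nonneg β) (by linarith)) (by linarith)
  exact mul_nonpos_of_nonneg_of_nonpos (rpow_pos_of_pos hz₀ _).le (by nlinarith)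

lemma antitoneOn_scaledGap {β : ℝ} (hβ : β ≤ 1) : AntitoneOn (scaledGap β) (Ioc 0 1) := by
  refine antitoneOn_of_hasDerivWithinAt_nonpos (convex_Ioc 0 1)
    (f' := fun z => z ^ (β - 1) * (2 * β * (z ^ β - 1) + β ^ 2 * (1 + β) * (1 - z)))
    (fun z hz => (hasDerivAt_scaledGap β hz.1).continuousAt.continuousWithinAt)
    (fun z hz => ?_) (fun z hz => ?_)
  all_goals rw [interior_Ioc] at hz
  · exact (hasDerivAt_scaledGap β hz.1).hasDerivWithinAt
  · exact scaledGap_deriv_nonpos hβ hz.1 hz.2.le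

lemma scaledGap_nonneg {β y : ℝ} (hβ : β ≤ 1) (hy₀ : 0 < y) (hy₁ : y ≤ 1) :
    0 ≤ scaledGap β y :=
  scaledGap_one β ▸ antitoneOn_scaledGap hβ ⟨hy₀, hy₁⟩ ⟨zero_lt_one, le_rfl⟩ hy₁

lemma log_sq_add_log_add_one_sub_nonneg {y : ℝ} (hy₀ : 0 < y) (hy₁ : y ≤ 1) :
    0 ≤ log y ^ 2 + log y + (1 - y) := by
  have hupper := log_le_sub_one_of_pos hy₀
  have hlower : y - 1 ≤ y * log y := by
    have h := mul_le_mul_of_nonneg_left (one_sub_inv_le_log_of_pos hy₀) hy₀.le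
    rwa [mul_sub, mul_one, mul_inv_cancel₀ hy₀.ne'] at h
  nlinarith [log_nonpos hy₀.le hy₁]

theorem g3_nonneg_general (α : ℝ) (hα₂ : α ≤ 0)
    (x : ℝ) (hx : x ∈ Ico (0 : ℝ) 1) :
    0 ≤ (phi α x) ^ 2 - (1 + x + α * x) * phi α x + x := by
  obtain ⟨hx₀, hx₁⟩ := hx
  have hy₀ : 0 < 1 - x := sub_pos.2 hx₁
  have hy₁ : 1 - x ≤ 1 := by linarith
  rcases eq_or_ne α (-1) with rfl | hα
  · rw [phi_neg_one hx₁]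
    convert log_sq_add_log_add_one_sub_nonneg hy₀ hy₁ using 1
    ring
  · have hβ : α + 1 ≠ 0 := fun h => hα (by linarith)
    rw [phi_of_ne_neg_one hα hx₁]
    calc 0 ≤ scaledGap (α + 1) (1 - x) / (α + 1) ^ 2 :=
          div_nonneg (scaledGap_nonneg (by linarith) hy₀ hy₁) (sq_nonneg _)
      _ = _ := by
          rw [scaledGap]
          field_simp
          ring

/-- For `-2 ≤ α ≤ 0` and `x ∈ [0,1)`, `φ(x)² - (1 + x + αx)φ(x) + x ≥ 0`. -/
theorem g3_nonneg (α : ℝ) (hα₁ : -2 ≤ α) (hα₂ : α ≤ 0)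
    (x : ℝ) (hx : x ∈ Ico (0 : ℝ) 1) :
    0 ≤ (phi α x) ^ 2 - (1 + x + α * x) * phi α x + x :=
  g3_nonneg_general α hα₂ x hx
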